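/- arXiv:1302.0160 — 3 statements merged into one kernel-verified Lean document; each statement's English description precedes it below -/
import Mathlib

section
/- Let X be a Banach space with a monotone Schauder basis {e_n}_{n∈ℕ}: there are biorthogonal functionals {e_n^*} ⊂ X*, the partial-sum projections P_n(x) = Σ_{k≤n} e_k^*(x) e_k satisfy ‖P_n(x)‖ ≤ ‖x‖ for all x and n, and P_n(x) → x in norm for every x ∈ X. Suppose S_X = ⋃_{n=1}^∞ S_n in such a way that the numbers b_n = inf{‖P_n(x)‖ : x ∈ S_n} are strictly positive and converge to 1. Then X admits an equivalent polyhedral norm supporting a countable boundary having property (*). -/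
open NormedSpace Filter Set Topology Pointwise

noncomputable section

/-- `g` is a weak-* limit point of `F`: every weak-* neighbourhood of `g`
contains infinitely many points of `F`. -/
def IsWeakStarLimitPoint {X : Type*} [NormedAddCommGroup X] [NormedSpace ℝ X]
    (F : Set (StrongDual ℝ X)) (g : StrongDual ℝ X) : Prop :=
  ∀ U : Set (WeakDual ℝ X), IsOpen U → StrongDual.toWeakDual g ∈ U →
    {f : StrongDual ℝ X | f ∈ F ∧ StrongDual.toWeakDual f ∈ U}.Infinite

/-- Property (*) of a set of functionals. -/
def PropertyStar {X : Type*} [NormedAddCommGroup X] [NormedSpace ℝ X]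
    (F : Set (StrongDual ℝ X)) : Prop :=
  ∀ g : StrongDual ℝ X, IsWeakStarLimitPoint F g →
    ∀ x : X, sSup ((fun f : StrongDual ℝ X => f x) '' F) = 1 → g x < 1

/-- `F` is a relative boundary. -/
def IsRelativeBoundary {X : Type*} [NormedAddCommGroup X] [NormedSpace ℝ X]
    (F : Set (StrongDual ℝ X)) : Prop :=
  ∀ x : X, sSup ((fun f : StrongDual ℝ X => f x) '' F) = 1 → ∃ f ∈ F, f x = 1

/-- `B` is a boundary for the norm `ν`: every element of `B` lies in the
`ν`-dual unit ball, and every `ν`-unit vector attains the value 1 at some member of `B`. -/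
def IsBoundaryFor {X : Type*} [NormedAddCommGroup X] [NormedSpace ℝ X]
    (ν : X → ℝ) (B : Set (StrongDual ℝ X)) : Prop :=
  (∀ f ∈ B, ∀ x : X, f x ≤ ν x) ∧ ∀ x : X, ν x = 1 → ∃ f ∈ B, f x = 1

/-- `ν` is an equivalent norm on `X`. -/
def IsEquivNorm {X : Type*} [NormedAddCommGroup X] [NormedSpace ℝ X]
    (ν : Seminorm ℝ X) : Prop :=
  ∃ c C : ℝ, 0 < c ∧ ∀ x : X, c * ‖x‖ ≤ ν x ∧ ν x ≤ C * ‖x‖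

/-- A norm (given as a function) is polyhedral if the unit ball of every
finite-dimensional subspace is a polytope, i.e. the convex hull of finitely many points. -/
def IsPolyhedralNorm {X : Type*} [NormedAddCommGroup X] [NormedSpace ℝ X]
    (ν : X → ℝ) : Prop :=
  ∀ Y : Subspace ℝ X, FiniteDimensional ℝ Y →
    ∃ T : Set X, T.Finite ∧ {x : X | x ∈ Y ∧ ν x ≤ 1} = convexHull ℝ T

/-- `E ⊆ X*` is weak-* locally relatively norm-compact. -/
def IsWeakStarLRC {X : Type*} [NormedAddCommGroup X] [NormedSpace ℝ X]
    (E : Set (StrongDual ℝ X)) : Prop :=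
  ∀ y ∈ E, ∃ U : Set (WeakDual ℝ X), IsOpen U ∧ StrongDual.toWeakDual y ∈ U ∧
    IsCompact (closure (E ∩ (fun f : StrongDual ℝ X => StrongDual.toWeakDual f) ⁻¹' U))

/-- `E` is a countable union of weak-* LRC sets. -/
def IsSigmaWeakStarLRC {X : Type*} [NormedAddCommGroup X] [NormedSpace ℝ X]
    (E : Set (StrongDual ℝ X)) : Prop :=
  ∃ E' : ℕ → Set (StrongDual ℝ X), E = ⋃ n, E' n ∧ ∀ n, IsWeakStarLRC (E' n)

/-- `E` is a countable union of weak-*-compact sets. -/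
def IsWeakStarSigmaCompact {X : Type*} [NormedAddCommGroup X] [NormedSpace ℝ X]
    (E : Set (StrongDual ℝ X)) : Prop :=
  ∃ C : ℕ → Set (WeakDual ℝ X), (∀ n, IsCompact (C n)) ∧
    (fun f : StrongDual ℝ X => StrongDual.toWeakDual f) '' E = ⋃ n, C n


/-!
Write `P n` for the partial-sum projections and let `δ n → 0`. For each `n` choose a finite
symmetric set of functionals in the dual unit ball that `(1 - δ n)`-norms the finite-dimensional
range of `P n`, and let `D` consist of the functionals `c n • a ∘ P n`, where
`c n * (1 - δ n) * b n = 1 + δ n`. The new norm is `ν x = sup {f x | f ∈ D}`.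

Every unit vector lies in some `S m`, where a member of `D` takes a value `≥ 1 + δ m`, so
`ν x > ‖x‖` for `x ≠ 0`; on the other hand `c n → 1`, so late members of `D` are almost dominated by
`‖·‖`. Hence on a compact set avoiding `0` the supremum is attained among finitely many members of
`D`. For a singleton this is the boundary property; for the unit sphere of a finite-dimensional
subspace it shows that the `ν`-ball of the subspace is a bounded intersection of finitely many
half-spaces, hence a polytope. Finally a weak* limit point `g` of `D` is approached by late members,
so `g x ≤ ‖x‖ < ν x`, which is property (*).
-/

section Polytope

variable {X : Type*} [NormedAddCommGroup X] [NormedSpace ℝ X]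

def polyhedralSet (Y : Submodule ℝ X) (H : Finset (StrongDual ℝ X)) : Set X :=
  {x | x ∈ Y ∧ ∀ f ∈ H, f x ≤ 1}

variable {Y : Submodule ℝ X} {H : Finset (StrongDual ℝ X)}

lemma polyhedralSet_eq_inter : polyhedralSet Y H = (Y : Set X) ∩ ⋂ f ∈ H, {x | f x ≤ 1} := by
  ext x; simp [polyhedralSet]

lemma convex_polyhedralSet : Convex ℝ (polyhedralSet Y H) := by
  rw [polyhedralSet_eq_inter]
  exact Y.convex.inter (convex_iInter₂ fun f _ => convex_halfSpace_le f.isLinear 1)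

lemma isCompact_polyhedralSet [FiniteDimensional ℝ Y]
    (hbdd : Bornology.IsBounded (polyhedralSet Y H)) : IsCompact (polyhedralSet Y H) := by
  have himage : polyhedralSet Y H = Subtype.val '' {y : Y | ∀ f ∈ H, f y ≤ 1} := by
    ext x
    exact ⟨fun hx => ⟨⟨x, hx.1⟩, hx.2, rfl⟩, by rintro ⟨y, hy, rfl⟩; exact ⟨y.2, hy⟩⟩
  have hclosed : IsClosed {y : Y | ∀ f ∈ H, f y ≤ 1} := by
    simp only [Set.ofPred_forall]
    exact isClosed_biInter fun f _ => isClosed_le (by fun_prop) continuous_const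
  obtain ⟨C, hC⟩ := hbdd.exists_norm_le
  have hbdd' : Bornology.IsBounded {y : Y | ∀ f ∈ H, f y ≤ 1} :=
    isBounded_iff_forall_norm_le.2 ⟨C, fun y hy => hC y ⟨y.2, hy⟩⟩
  rw [himage]
  exact (Metric.isCompact_of_isClosed_isBounded hclosed hbdd').image continuous_subtype_val

lemma eventually_add_smul_mem_polyhedralSet {x y : X} (hx : x ∈ polyhedralSet Y H)
    (hy : y ∈ polyhedralSet Y H) (hact : ∀ f ∈ H, f x = 1 → f y = 1) :
    ∀ᶠ t in 𝓝 (0 : ℝ), x + t • (y - x) ∈ polyhedralSet Y H := by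
  have hmemY (t : ℝ) : x + t • (y - x) ∈ Y := Y.add_mem hx.1 (Y.smul_mem t (Y.sub_mem hy.1 hx.1))
  simp only [polyhedralSet, Set.mem_ofPred_eq, hmemY, true_and]
  refine (eventually_all_finset H).2 fun f hf => ?_
  rcases (hx.2 f hf).eq_or_lt with hfx | hfx
  · refine .of_forall fun t => ?_
    simp [map_sub, hfx, hact f hf hfx]
  · have hcont : Continuous fun t : ℝ => f (x + t • (y - x)) := by fun_prop
    exact (hcont.tendsto' 0 (f x) (by simp)).eventually_le_const hfx

lemma eq_of_mem_extremePoints_polyhedralSet {x y : X}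
    (hx : x ∈ (polyhedralSet Y H).extremePoints ℝ) (hy : y ∈ polyhedralSet Y H)
    (hact : ∀ f ∈ H, f x = 1 → f y = 1) : y = x := by
  have hnear := eventually_add_smul_mem_polyhedralSet hx.1 hy hact
  have hnear' : ∀ᶠ t in 𝓝 (0 : ℝ), x - t • (y - x) ∈ polyhedralSet Y H := by
    have := (continuous_neg.tendsto' (0 : ℝ) 0 neg_zero).eventually hnear
    simpa only [neg_smul, ← sub_eq_add_neg] using this
  obtain ⟨t, ⟨hplus, hminus⟩, ht⟩ :=
    (((hnear.and hnear').filter_mono nhdsWithin_le_nhds).and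
      (self_mem_nhdsWithin (s := {(0 : ℝ)}ᶜ))).exists
  have hseg : x ∈ openSegment ℝ (x - t • (y - x)) (x + t • (y - x)) := by
    simpa only [midpoint_sub_add] using
      midpoint_mem_openSegment (𝕜 := ℝ) (x - t • (y - x)) (x + t • (y - x))
  have hzero : t • (y - x) = 0 := by simpa using hx.2 hminus hplus hseg
  exact sub_eq_zero.1 ((smul_eq_zero.1 hzero).resolve_left ht)

lemma finite_extremePoints_polyhedralSet : ((polyhedralSet Y H).extremePoints ℝ).Finite := by
  classical
  refine Set.Finite.of_finite_image
    (f := fun x : X => H.filter (fun f : StrongDual ℝ X => f x = 1))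
    (H.powerset.finite_toSet.subset ?_) fun x hx x' hx' heq => ?_
  · rintro _ ⟨x, -, rfl⟩
    exact Finset.mem_coe.2 (Finset.mem_powerset.2 (Finset.filter_subset _ H))
  · refine eq_of_mem_extremePoints_polyhedralSet hx' hx.1 fun f hf hfx' => ?_
    have : f ∈ H.filter (fun f => f x' = 1) := Finset.mem_filter.2 ⟨hf, hfx'⟩
    rw [← show _ = H.filter (fun f => f x' = 1) from heq] at this
    exact (Finset.mem_filter.1 this).2

lemma exists_finite_convexHull_eq_polyhedralSet [FiniteDimensional ℝ Y]
    (hbdd : Bornology.IsBounded (polyhedralSet Y H)) :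
    ∃ T : Set X, T.Finite ∧ polyhedralSet Y H = convexHull ℝ T := by
  have hfin := finite_extremePoints_polyhedralSet (Y := Y) (H := H)
  refine ⟨_, hfin, ?_⟩
  exact (closure_convexHull_extremePoints (isCompact_polyhedralSet hbdd)
    convex_polyhedralSet).symm.trans (hfin.isClosed_convexHull (𝕜 := ℝ)).closure_eq

end Polytope

section SupSeminorm

variable {X : Type*} [NormedAddCommGroup X] [NormedSpace ℝ X]

lemma abs_apply_le_sSup {D : Set (StrongDual ℝ X)} {x : X} (hD : ∀ f ∈ D, -f ∈ D)
    (hbdd : BddAbove ((fun f : StrongDual ℝ X => f x) '' D)) {f : StrongDual ℝ X} (hf : f ∈ D) :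
    |f x| ≤ sSup ((fun f : StrongDual ℝ X => f x) '' D) := by
  refine abs_le'.2 ⟨le_csSup hbdd ⟨f, hf, rfl⟩, ?_⟩
  simpa using le_csSup hbdd ⟨-f, hD f hf, rfl⟩

lemma sSup_apply_nonneg {D : Set (StrongDual ℝ X)} {x : X} (hD : ∀ f ∈ D, -f ∈ D)
    (hbdd : BddAbove ((fun f : StrongDual ℝ X => f x) '' D)) :
    0 ≤ sSup ((fun f : StrongDual ℝ X => f x) '' D) := by
  rcases D.eq_empty_or_nonempty with rfl | ⟨f, hf⟩
  · simp
  · exact (abs_nonneg _).trans (abs_apply_le_sSup hD hbdd hf)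

def supSeminorm (D : Set (StrongDual ℝ X)) (hD : ∀ f ∈ D, -f ∈ D)
    (hbdd : ∀ x, BddAbove ((fun f : StrongDual ℝ X => f x) '' D)) : Seminorm ℝ X :=
  Seminorm.ofSMulLE (fun x => sSup ((fun f : StrongDual ℝ X => f x) '' D))
    (le_antisymm (Real.sSup_le (by rintro _ ⟨f, -, rfl⟩; simp) le_rfl)
      (sSup_apply_nonneg hD (hbdd 0)))
    (fun x y => Real.sSup_le
      (by
        rintro _ ⟨f, hf, rfl⟩
        show f (x + y) ≤ _
        rw [map_add]
        exact add_le_add (le_csSup (hbdd x) ⟨f, hf, rfl⟩) (le_csSup (hbdd y) ⟨f, hf, rfl⟩))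
      (add_nonneg (sSup_apply_nonneg hD (hbdd x)) (sSup_apply_nonneg hD (hbdd y))))
    (fun r x => Real.sSup_le
      (by
        rintro _ ⟨f, hf, rfl⟩
        show f (r • x) ≤ _
        rw [map_smul, smul_eq_mul, Real.norm_eq_abs]
        exact (le_abs_self _).trans (abs_mul r (f x) ▸
          mul_le_mul_of_nonneg_left (abs_apply_le_sSup hD (hbdd x) hf) (abs_nonneg r)))
      (mul_nonneg (norm_nonneg r) (sSup_apply_nonneg hD (hbdd x))))

variable {D : Set (StrongDual ℝ X)} {hD : ∀ f ∈ D, -f ∈ D}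
  {hbdd : ∀ x, BddAbove ((fun f : StrongDual ℝ X => f x) '' D)}

lemma apply_le_supSeminorm {f : StrongDual ℝ X} (hf : f ∈ D) (x : X) :
    f x ≤ supSeminorm D hD hbdd x :=
  le_csSup (hbdd x) ⟨f, hf, rfl⟩

lemma supSeminorm_le {x : X} {a : ℝ} (h : ∀ f ∈ D, f x ≤ a) (ha : 0 ≤ a) :
    supSeminorm D hD hbdd x ≤ a :=
  Real.sSup_le (by rintro _ ⟨f, hf, rfl⟩; exact h f hf) ha

lemma exists_apply_eq_supSeminorm {x : X} {a : ℝ} (ha : 0 ≤ a)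
    (hlt : a < supSeminorm D hD hbdd x) (hfin : {f ∈ D | a < f x}.Finite) :
    ∃ f ∈ D, f x = supSeminorm D hD hbdd x := by
  have hne : ((fun f : StrongDual ℝ X => f x) '' D).Nonempty := by
    refine Set.nonempty_iff_ne_empty.2 fun hemp => ?_
    have : supSeminorm D hD hbdd x = 0 := by
      change sSup _ = 0
      rw [hemp, Real.sSup_empty]
    linarith
  obtain ⟨_, ⟨f₁, hf₁, rfl⟩, hf₁x⟩ := exists_lt_of_lt_csSup hne hlt
  have hTne : ((fun f : StrongDual ℝ X => f x) '' {f ∈ D | a < f x}).Nonempty :=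
    ⟨_, f₁, ⟨hf₁, hf₁x⟩, rfl⟩
  obtain ⟨f₀, ⟨hf₀, hf₀x⟩, hmax⟩ := hTne.csSup_mem (hfin.image _)
  refine ⟨f₀, hf₀, le_antisymm (apply_le_supSeminorm hf₀ x) (csSup_le hne ?_)⟩
  rintro _ ⟨f, hf, rfl⟩
  show f x ≤ f₀ x
  rcases le_or_gt (f x) a with hfa | hfa
  · exact hfa.trans hf₀x.le
  · exact (le_csSup (hfin.image _).bddAbove ⟨f, ⟨hf, hfa⟩, rfl⟩).trans_eq hmax.symm

end SupSeminorm

lemma IsWeakStarLimitPoint.exists_ge_mem {X : Type*} [NormedAddCommGroup X] [NormedSpace ℝ X]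
    {D : ℕ → Finset (StrongDual ℝ X)} {g : StrongDual ℝ X}
    (hg : IsWeakStarLimitPoint (⋃ n, (D n : Set (StrongDual ℝ X))) g) {U : Set (WeakDual ℝ X)}
    (hU : IsOpen U) (hgU : StrongDual.toWeakDual g ∈ U) (N : ℕ) :
    ∃ n ≥ N, ∃ f ∈ D n, StrongDual.toWeakDual f ∈ U := by
  have hhead : (⋃ n ∈ Finset.range N, (D n : Set (StrongDual ℝ X))).Finite :=
    (Finset.range N).finite_toSet.biUnion fun n _ => (D n).finite_toSet
  obtain ⟨f, ⟨hf, hfU⟩, hfhead⟩ := Set.not_subset.1 fun hsub => hg U hU hgU (hhead.subset hsub)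
  obtain ⟨n, hfn⟩ := Set.mem_iUnion.1 hf
  refine ⟨n, not_lt.1 fun hn => hfhead ?_, f, hfn, hfU⟩
  exact Set.mem_biUnion (Finset.mem_range.2 hn) hfn

structure IsStrictlyNormingFamily {X : Type*} [NormedAddCommGroup X] [NormedSpace ℝ X]
    (D : ℕ → Finset (StrongDual ℝ X)) (c : ℕ → ℝ) : Prop where
  tendsto_bound : Tendsto c atTop (𝓝 1)
  apply_le : ∀ n, ∀ f ∈ D n, ∀ x, f x ≤ c n * ‖x‖
  neg_mem : ∀ n, ∀ f ∈ D n, -f ∈ D n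
  one_lt_apply : ∀ x, ‖x‖ = 1 → ∃ n, ∃ f ∈ D n, 1 < f x

namespace IsStrictlyNormingFamily

variable {X : Type*} [NormedAddCommGroup X] [NormedSpace ℝ X]
  {D : ℕ → Finset (StrongDual ℝ X)} {c : ℕ → ℝ}

lemma exists_bound (h : IsStrictlyNormingFamily D c) : ∃ C, 0 ≤ C ∧ ∀ n, c n ≤ C := by
  obtain ⟨C, hC⟩ := h.tendsto_bound.bddAbove_range
  exact ⟨max C 0, le_max_right _ _, fun n => (hC ⟨n, rfl⟩).trans (le_max_left _ _)⟩

lemma neg_mem_iUnion (h : IsStrictlyNormingFamily D c) :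
    ∀ f ∈ ⋃ n, (D n : Set (StrongDual ℝ X)), -f ∈ ⋃ n, (D n : Set (StrongDual ℝ X)) := by
  simp only [Set.mem_iUnion, Finset.mem_coe]
  rintro f ⟨n, hf⟩
  exact ⟨n, h.neg_mem n f hf⟩

lemma exists_apply_le_mul_norm (h : IsStrictlyNormingFamily D c) :
    ∃ C, 0 ≤ C ∧ ∀ f ∈ ⋃ n, (D n : Set (StrongDual ℝ X)), ∀ x, f x ≤ C * ‖x‖ := by
  obtain ⟨C, hC0, hC⟩ := h.exists_bound
  refine ⟨C, hC0, fun f hf x => ?_⟩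
  obtain ⟨n, hf⟩ := Set.mem_iUnion.1 hf
  exact (h.apply_le n f hf x).trans (mul_le_mul_of_nonneg_right (hC n) (norm_nonneg x))

lemma bddAbove_apply (h : IsStrictlyNormingFamily D c) (x : X) :
    BddAbove ((fun f : StrongDual ℝ X => f x) '' ⋃ n, (D n : Set (StrongDual ℝ X))) := by
  obtain ⟨C, -, hC⟩ := h.exists_apply_le_mul_norm
  exact ⟨C * ‖x‖, by rintro _ ⟨f, hf, rfl⟩; exact hC f hf x⟩

lemma eventually_apply_le_norm_add (h : IsStrictlyNormingFamily D c) (R : ℝ) {ρ : ℝ}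
    (hρ : 0 < ρ) :
    ∀ᶠ n in atTop, ∀ f ∈ D n, ∀ x, ‖x‖ ≤ R → f x ≤ ‖x‖ + ρ := by
  have hs : 0 < ρ / (|R| + 1) := by positivity
  filter_upwards [h.tendsto_bound.eventually_le_const (lt_add_of_pos_right 1 hs)]
    with n hn f hf x hx
  have hxR : ‖x‖ ≤ |R| + 1 := by linarith [le_abs_self R]
  calc f x ≤ c n * ‖x‖ := h.apply_le n f hf x
    _ ≤ (1 + ρ / (|R| + 1)) * ‖x‖ := mul_le_mul_of_nonneg_right hn (norm_nonneg x)
    _ ≤ ‖x‖ + ρ / (|R| + 1) * (|R| + 1) := by rw [add_mul, one_mul]; gcongr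
    _ = ‖x‖ + ρ := by field_simp

protected def seminorm (h : IsStrictlyNormingFamily D c) : Seminorm ℝ X :=
  supSeminorm _ h.neg_mem_iUnion h.bddAbove_apply

section

variable (h : IsStrictlyNormingFamily D c)

lemma apply_le_seminorm {n : ℕ} {f : StrongDual ℝ X} (hf : f ∈ D n) (x : X) :
    f x ≤ h.seminorm x :=
  apply_le_supSeminorm (Set.mem_iUnion.2 ⟨n, hf⟩) x

lemma norm_lt_seminorm {x : X} (hx : x ≠ 0) : ‖x‖ < h.seminorm x := by
  have hx' : ‖x‖ ≠ 0 := norm_ne_zero_iff.2 hx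
  obtain ⟨n, f, hf, hfx⟩ := h.one_lt_apply (‖x‖⁻¹ • x)
    (by rw [norm_smul, norm_inv, norm_norm, inv_mul_cancel₀ hx'])
  calc ‖x‖ = ‖x‖ * 1 := (mul_one _).symm
    _ < ‖x‖ * f (‖x‖⁻¹ • x) := mul_lt_mul_of_pos_left hfx (norm_pos_iff.2 hx)
    _ = f x := by rw [map_smul, smul_eq_mul, ← mul_assoc, mul_inv_cancel₀ hx', one_mul]
    _ ≤ h.seminorm x := h.apply_le_seminorm hf x

lemma norm_le_seminorm (x : X) : ‖x‖ ≤ h.seminorm x := by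
  rcases eq_or_ne x 0 with rfl | hx
  · simp
  · exact (h.norm_lt_seminorm hx).le

lemma seminorm_le_mul_norm : ∃ C, 0 ≤ C ∧ ∀ x, h.seminorm x ≤ C * ‖x‖ := by
  obtain ⟨C, hC0, hC⟩ := h.exists_apply_le_mul_norm
  exact ⟨C, hC0, fun x => supSeminorm_le (fun f hf => hC f hf x) (by positivity)⟩

lemma isEquivNorm : IsEquivNorm h.seminorm := by
  obtain ⟨C, -, hC⟩ := h.seminorm_le_mul_norm
  exact ⟨1, C, one_pos, fun x => ⟨by simpa using h.norm_le_seminorm x, hC x⟩⟩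

lemma continuous_seminorm : Continuous h.seminorm := by
  obtain ⟨C, hC0, hC⟩ := h.seminorm_le_mul_norm
  refine (LipschitzWith.of_dist_le_mul (K := ⟨C, hC0⟩) fun x y => ?_).continuous
  rw [Real.dist_eq, dist_eq_norm]
  exact (abs_sub_map_le_sub _ x y).trans (hC (x - y))

/-- By compactness the gap `h.seminorm x - ‖x‖` is bounded below on `K`, so members of late `D n`
stay below the supremum by a fixed margin. -/
lemma exists_apply_eq_seminorm_of_isCompact {K : Set X} (hK : IsCompact K) (hK0 : (0 : X) ∉ K) :
    ∃ N, ∀ x ∈ K, ∃ n < N, ∃ f ∈ D n, f x = h.seminorm x := by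
  have hne : ∀ x ∈ K, x ≠ 0 := fun x hx hx0 => hK0 (hx0 ▸ hx)
  obtain ⟨γ, hγ, hγK⟩ := hK.exists_forall_le' (a := 0) (f := fun x => h.seminorm x - ‖x‖)
    ((h.continuous_seminorm.sub continuous_norm).continuousOn)
    fun x hx => sub_pos.2 (h.norm_lt_seminorm (hne x hx))
  obtain ⟨R, hR⟩ := hK.isBounded.exists_norm_le
  obtain ⟨N, hN⟩ := eventually_atTop.1 (h.eventually_apply_le_norm_add R (half_pos hγ))
  refine ⟨N, fun x hx => ?_⟩
  have hhead : ∀ n, ∀ f ∈ D n, h.seminorm x - γ / 2 < f x → n < N := fun n f hf hfx =>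
    not_le.1 fun hn => by linarith [hN n hn f hf x (hR x hx), hγK x hx]
  have hfin : {f ∈ ⋃ n, (D n : Set (StrongDual ℝ X)) | h.seminorm x - γ / 2 < f x}.Finite := by
    classical
    refine ((Finset.range N).biUnion D).finite_toSet.subset fun f ⟨hf, hfx⟩ => ?_
    obtain ⟨n, hf⟩ := Set.mem_iUnion.1 hf
    exact Finset.mem_biUnion.2 ⟨n, Finset.mem_range.2 (hhead n f hf hfx), hf⟩
  obtain ⟨f, hf, hfx⟩ := exists_apply_eq_supSeminorm
    (show 0 ≤ h.seminorm x - γ / 2 by linarith [hγK x hx, norm_nonneg x])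
    (sub_lt_self _ (half_pos hγ)) hfin
  obtain ⟨n, hf⟩ := Set.mem_iUnion.1 hf
  exact ⟨n, hhead n f hf (hfx ▸ sub_lt_self _ (half_pos hγ)), f, hf, hfx⟩

lemma isBoundaryFor :
    IsBoundaryFor (fun x => h.seminorm x) (⋃ n, (D n : Set (StrongDual ℝ X))) := by
  refine ⟨fun f hf x => ?_, fun x hx => ?_⟩
  · obtain ⟨n, hf⟩ := Set.mem_iUnion.1 hf
    exact h.apply_le_seminorm hf x
  · have hx0 : x ≠ 0 := by rintro rfl; simp at hx
    obtain ⟨N, hN⟩ := h.exists_apply_eq_seminorm_of_isCompact isCompact_singleton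
      (Set.mem_singleton_iff.not.2 hx0.symm)
    obtain ⟨n, -, f, hf, hfx⟩ := hN x rfl
    exact ⟨f, Set.mem_iUnion.2 ⟨n, hf⟩, hfx.trans hx⟩

lemma isPolyhedralNorm : IsPolyhedralNorm (fun x => h.seminorm x) := by
  intro Y hY
  have hK : IsCompact (Subtype.val '' Metric.sphere (0 : Y) 1) :=
    (isCompact_sphere 0 1).image continuous_subtype_val
  obtain ⟨N, hN⟩ := h.exists_apply_eq_seminorm_of_isCompact hK (by simp)
  classical
  set H := (Finset.range N).biUnion D
  have hball : {x | x ∈ Y ∧ h.seminorm x ≤ 1} = polyhedralSet Y H := by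
    ext x
    refine ⟨fun ⟨hxY, hx⟩ => ⟨hxY, fun f hf => ?_⟩, fun ⟨hxY, hx⟩ => ⟨hxY, ?_⟩⟩
    · obtain ⟨n, -, hf⟩ := Finset.mem_biUnion.1 hf
      exact (h.apply_le_seminorm hf x).trans hx
    · rcases eq_or_ne x 0 with rfl | hx0
      · simp
      set u := ‖x‖⁻¹ • x
      have hxu : x = ‖x‖ • u := (smul_inv_smul₀ (norm_ne_zero_iff.2 hx0) x).symm
      obtain ⟨n, hn, f, hf, hfu⟩ :=
        hN u ⟨⟨u, Y.smul_mem _ hxY⟩, by simp [u, norm_smul, hx0], rfl⟩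
      calc h.seminorm x = h.seminorm (‖x‖ • u) := by rw [← hxu]
        _ = ‖x‖ * f u := by rw [map_smul_eq_mul, norm_norm, hfu]
        _ = f x := by rw [← smul_eq_mul, ← map_smul, ← hxu]
        _ ≤ 1 := hx f (Finset.mem_biUnion.2 ⟨n, Finset.mem_range.2 hn, hf⟩)
  rw [hball]
  refine exists_finite_convexHull_eq_polyhedralSet (hball ▸ ?_)
  exact (Metric.isBounded_closedBall (x := (0 : X)) (r := 1)).subset fun x hx =>
    mem_closedBall_zero_iff.2 ((h.norm_le_seminorm x).trans hx.2)

end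

lemma propertyStar (h : IsStrictlyNormingFamily D c) :
    PropertyStar (⋃ n, (D n : Set (StrongDual ℝ X))) := by
  intro g hg x hx
  change h.seminorm x = 1 at hx
  have hx0 : x ≠ 0 := by rintro rfl; simp at hx
  suffices g x ≤ ‖x‖ from this.trans_lt (hx ▸ h.norm_lt_seminorm hx0)
  refine le_of_forall_pos_le_add fun ρ hρ => ?_
  obtain ⟨N, hN⟩ := eventually_atTop.1 (h.eventually_apply_le_norm_add ‖x‖ (half_pos hρ))
  obtain ⟨n, hn, f, hf, hfU⟩ := hg.exists_ge_mem (U := {φ : WeakDual ℝ X | g x - ρ / 2 < φ x})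
    (isOpen_lt continuous_const (WeakDual.eval_continuous x)) (by simpa using half_pos hρ) N
  linarith [hN n hn f hf x le_rfl, show g x - ρ / 2 < f x from hfU]

end IsStrictlyNormingFamily

section Norming

variable {X : Type*} [NormedAddCommGroup X] [NormedSpace ℝ X]

lemma IsCompact.exists_finset_norm_sub_le_apply {K : Set X} (hK : IsCompact K) {δ : ℝ}
    (hδ : 0 < δ) :
    ∃ A : Finset (StrongDual ℝ X), (∀ a ∈ A, ‖a‖ ≤ 1) ∧ ∀ y ∈ K, ∃ a ∈ A, ‖y‖ - δ ≤ a y := by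
  classical
  choose g hg1 hgu using fun u : X => exists_dual_vector'' ℝ u
  obtain ⟨t, -, hcover⟩ := hK.elim_nhds_subcover (fun u => Metric.ball u (δ / 2))
    fun u _ => Metric.ball_mem_nhds u (half_pos hδ)
  refine ⟨t.image g, by simpa using fun u _ => hg1 u, fun y hy => ?_⟩
  obtain ⟨u, hu, hyu⟩ := Set.mem_iUnion₂.1 (hcover hy)
  refine ⟨g u, Finset.mem_image_of_mem g hu, ?_⟩
  have hdist : ‖y - u‖ < δ / 2 := by rwa [Metric.mem_ball, dist_eq_norm] at hyu
  have hgyu : |g u (y - u)| ≤ ‖y - u‖ :=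
    ((g u).le_opNorm _).trans (mul_le_of_le_one_left (norm_nonneg _) (hg1 u))
  have hgy : g u y = ‖u‖ + g u (y - u) := by simp [map_sub, hgu]
  linarith [abs_le.1 hgyu, norm_sub_norm_le y u]

lemma Submodule.exists_finset_norming (V : Submodule ℝ X) [FiniteDimensional ℝ V] {δ : ℝ}
    (hδ : 0 < δ) :
    ∃ A : Finset (StrongDual ℝ X), (∀ a ∈ A, ‖a‖ ≤ 1) ∧ (∀ a ∈ A, -a ∈ A) ∧
      ∀ y ∈ V, ∃ a ∈ A, (1 - δ) * ‖y‖ ≤ a y := by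
  classical
  obtain ⟨A, hA1, hA⟩ :=
    ((isCompact_sphere (0 : V) 1).image continuous_subtype_val).exists_finset_norm_sub_le_apply hδ
  refine ⟨insert 0 (A ∪ -A), ?_, ?_, fun y hy => ?_⟩
  · simp only [Finset.mem_insert, Finset.mem_union, Finset.mem_neg']
    rintro a (rfl | ha | ha)
    · simp
    · exact hA1 a ha
    · simpa using hA1 _ ha
  · simp only [Finset.mem_insert, Finset.mem_union, Finset.mem_neg', neg_eq_zero, neg_neg]
    tauto
  rcases eq_or_ne y 0 with rfl | hy0
  · exact ⟨0, Finset.mem_insert_self _ _, by simp⟩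
  set u := ‖y‖⁻¹ • y
  have hyu : y = ‖y‖ • u := (smul_inv_smul₀ (norm_ne_zero_iff.2 hy0) y).symm
  obtain ⟨a, ha, hau⟩ := hA u ⟨⟨u, V.smul_mem _ hy⟩, by simp [u, norm_smul, hy0], rfl⟩
  refine ⟨a, by simp [ha], ?_⟩
  have hu : ‖u‖ = 1 := by simp [u, norm_smul, hy0]
  rw [hyu, map_smul, smul_eq_mul, norm_smul, norm_norm, hu, mul_one, mul_comm]
  exact mul_le_mul_of_nonneg_left (by linarith) (norm_nonneg y)

lemma finiteDimensional_range_sum_smulRight {ι : Type*} (s : Finset ι) (es : ι → StrongDual ℝ X)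
    (e : ι → X) :
    FiniteDimensional ℝ
      (LinearMap.range ((∑ k ∈ s, (es k).smulRight (e k) : X →L[ℝ] X) : X →ₗ[ℝ] X)) := by
  have := FiniteDimensional.span_of_finite ℝ (s.finite_toSet.image e)
  refine Submodule.finiteDimensional_of_le (S₂ := Submodule.span ℝ (e '' s)) ?_
  rintro _ ⟨z, rfl⟩
  simp only [ContinuousLinearMap.coe_coe, _root_.sum_apply,
    ContinuousLinearMap.smulRight_apply]
  exact Submodule.sum_mem _ fun k hk =>
    Submodule.smul_mem _ _ (Submodule.subset_span (Set.mem_image_of_mem e hk))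

end Norming

/-- Index `n` of the family corresponds to `P (n + 1)`, and `c n` is chosen so that
`c n * (1 - δ n) * b (n + 1) = 1 + δ n`. -/
theorem exists_isStrictlyNormingFamily {X : Type*} [NormedAddCommGroup X] [NormedSpace ℝ X]
    (P : ℕ → X →L[ℝ] X) (hPfin : ∀ n, FiniteDimensional ℝ (LinearMap.range (P n : X →ₗ[ℝ] X)))
    (hP : ∀ n x, ‖P n x‖ ≤ ‖x‖) (S : ℕ → Set X) (b : ℕ → ℝ)
    (hcover : Metric.sphere (0 : X) 1 ⊆ ⋃ (n : ℕ) (_ : 1 ≤ n), S n)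
    (hb : ∀ n, 1 ≤ n → ∀ z ∈ S n, b n ≤ ‖P n z‖) (hbpos : ∀ n, 1 ≤ n → 0 < b n)
    (hblim : Tendsto b atTop (𝓝 1)) :
    ∃ (D : ℕ → Finset (StrongDual ℝ X)) (c : ℕ → ℝ), IsStrictlyNormingFamily D c := by
  classical
  obtain ⟨δ, -, hδ, hδlim⟩ := exists_seq_strictAnti_tendsto' (zero_lt_one' ℝ)
  choose A hA1 hAneg hAnorm using fun n =>
    haveI := hPfin (n + 1)
    (LinearMap.range (P (n + 1) : X →ₗ[ℝ] X)).exists_finset_norming (hδ n).1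
  set c : ℕ → ℝ := fun n => (1 + δ n) / ((1 - δ n) * b (n + 1))
  have hden (n : ℕ) : 0 < (1 - δ n) * b (n + 1) :=
    mul_pos (sub_pos.2 (hδ n).2) (hbpos _ n.succ_pos)
  have hc (n : ℕ) : 0 ≤ c n := (div_pos (by linarith [(hδ n).1]) (hden n)).le
  refine ⟨fun n => (A n).image fun a => c n • a.comp (P (n + 1)), c, ⟨?_, ?_, ?_, ?_⟩⟩
  · have := ((tendsto_const_nhds (x := (1 : ℝ))).add hδlim).div
      (((tendsto_const_nhds (x := (1 : ℝ))).sub hδlim).mul (hblim.comp (tendsto_add_atTop_nat 1)))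
      (by norm_num)
    rwa [add_zero, sub_zero, one_mul, div_one] at this
  · simp only [Finset.mem_image]
    rintro n _ ⟨a, ha, rfl⟩ x
    refine mul_le_mul_of_nonneg_left ?_ (hc n)
    calc a (P (n + 1) x) ≤ ‖a‖ * ‖P (n + 1) x‖ := (le_abs_self _).trans (a.le_opNorm _)
      _ ≤ ‖x‖ := (mul_le_of_le_one_left (norm_nonneg _) (hA1 n a ha)).trans (hP _ x)
  · simp only [Finset.mem_image]
    rintro n _ ⟨a, ha, rfl⟩
    exact ⟨-a, hAneg n a ha, by rw [ContinuousLinearMap.neg_comp, smul_neg]⟩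
  · intro x hx
    obtain ⟨m, hm, hxm⟩ := Set.mem_iUnion₂.1 (hcover (mem_sphere_zero_iff_norm.2 hx))
    obtain ⟨n, rfl⟩ := Nat.exists_eq_add_of_le' hm
    obtain ⟨a, ha, hax⟩ :=
      hAnorm n (P (n + 1) x) (LinearMap.mem_range_self (P (n + 1) : X →ₗ[ℝ] X) x)
    refine ⟨n, c n • a.comp (P (n + 1)), Finset.mem_image_of_mem _ ha, ?_⟩
    calc 1 < 1 + δ n := lt_add_of_pos_right 1 (hδ n).1
      _ = c n * ((1 - δ n) * b (n + 1)) := (div_mul_cancel₀ _ (hden n).ne').symm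
      _ ≤ c n * a (P (n + 1) x) :=
        mul_le_mul_of_nonneg_left ((mul_le_mul_of_nonneg_left (hb _ hm x hxm)
          (sub_pos.2 (hδ n).2).le).trans hax) (hc n)

open Classical in
theorem stmt16_general {X : Type*} [NormedAddCommGroup X] [NormedSpace ℝ X]
    (e : ℕ → X) (es : ℕ → StrongDual ℝ X)
    (hmonot : ∀ (n : ℕ) (z : X), ‖∑ k ∈ Finset.Iic n, es k z • e k‖ ≤ ‖z‖)
    (S : ℕ → Set X) (b : ℕ → ℝ)
    (hcover : Metric.sphere (0 : X) 1 = ⋃ (n : ℕ) (_ : 1 ≤ n), S n)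
    (hb : ∀ n, 1 ≤ n →
      b n = sInf ((fun z : X => ‖∑ k ∈ Finset.Iic n, es k z • e k‖) '' S n))
    (hbpos : ∀ n, 1 ≤ n → 0 < b n)
    (hblim : Tendsto b atTop (𝓝 1)) :
    ∃ ν : Seminorm ℝ X, IsEquivNorm ν ∧ IsPolyhedralNorm (fun z => ν z) ∧
      ∃ D : Set (StrongDual ℝ X), D.Countable ∧
        IsBoundaryFor (fun z => ν z) D ∧ PropertyStar D := by
  set P : ℕ → X →L[ℝ] X := fun n => ∑ k ∈ Finset.Iic n, (es k).smulRight (e k)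
  have hP (n : ℕ) (z : X) : P n z = ∑ k ∈ Finset.Iic n, es k z • e k := by simp [P]
  have hbP (n : ℕ) (hn : 1 ≤ n) (z : X) (hz : z ∈ S n) : b n ≤ ‖P n z‖ := by
    rw [hb n hn, hP]
    exact csInf_le ⟨0, by rintro _ ⟨w, -, rfl⟩; positivity⟩ ⟨z, hz, rfl⟩
  obtain ⟨D, c, h⟩ := exists_isStrictlyNormingFamily P
    (fun n => finiteDimensional_range_sum_smulRight _ es e) (fun n z => hP n z ▸ hmonot n z) S b
    hcover.subset hbP hbpos hblim
  exact ⟨h.seminorm, h.isEquivNorm, h.isPolyhedralNorm, _,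
    Set.countable_iUnion fun n => (D n).countable_toSet, h.isBoundaryFor, h.propertyStar⟩

open Classical in
theorem stmt16 {X : Type*} [NormedAddCommGroup X] [NormedSpace ℝ X] [CompleteSpace X]
    (e : ℕ → X) (es : ℕ → StrongDual ℝ X)
    (hbi : ∀ k l, es k (e l) = if k = l then 1 else 0)
    (hmonot : ∀ (n : ℕ) (z : X), ‖∑ k ∈ Finset.Iic n, es k z • e k‖ ≤ ‖z‖)
    (hconv : ∀ z : X,
      Tendsto (fun n : ℕ => ∑ k ∈ Finset.Iic n, es k z • e k) atTop (𝓝 z))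
    (S : ℕ → Set X) (b : ℕ → ℝ)
    (hS : ∀ n, S n ⊆ Metric.sphere (0 : X) 1)
    (hcover : Metric.sphere (0 : X) 1 = ⋃ (n : ℕ) (_ : 1 ≤ n), S n)
    (hb : ∀ n, 1 ≤ n →
      b n = sInf ((fun z : X => ‖∑ k ∈ Finset.Iic n, es k z • e k‖) '' S n))
    (hbpos : ∀ n, 1 ≤ n → 0 < b n)
    (hblim : Tendsto b atTop (𝓝 1)) :
    ∃ ν : Seminorm ℝ X, IsEquivNorm ν ∧ IsPolyhedralNorm (fun z => ν z) ∧
      ∃ D : Set (StrongDual ℝ X), D.Countable ∧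
        IsBoundaryFor (fun z => ν z) D ∧ PropertyStar D :=
  stmt16_general e es hmonot S b hcover hb hbpos hblim

end
end

section
/- Let K be a σ-discrete compact Hausdorff space, i.e., K = ⋃_{n=0}^∞ D_n where each D_n is a discrete subset of K (every point of D_n is relatively isolated in D_n). Then, for every ε > 0, the space C(K) of continuous real-valued functions on K with the supremum norm admits an equivalent polyhedral norm |||·||| satisfying (1−ε)‖f‖_∞ ≤ |||f||| ≤ (1+ε)‖f‖_∞ for all f ∈ C(K), and (C(K), |||·|||) admits a boundary having property (*). -/
/-!
Because `K` is σ-discrete it carries a weight `1 ≤ w ≤ 1 + ε` each point of which is a strict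
local maximum with a definite gap. For the weighted sup norm `ν f = sup_x w x |f x|` this forces
all near-maximisers of `x ↦ w x |f x|` to form a finite set, by compactness. Hence the signed
weighted evaluations `±w x δₓ` form a boundary with property (*).

A boundary with property (*) makes any equivalent norm polyhedral: on a finite-dimensional
subspace `Y` only finitely many boundary functionals norm a unit vector of `Y`, since a weak-*
limit point of infinitely many of them would, by compactness of the unit sphere of `Y`, take the
value `1` on it. So the unit ball of `Y` is a compact polyhedron, and a compact polyhedron has
finitely many extreme points, whose convex hull it is by Krein–Milman.
-/

open NormedSpace Filter Set Topology Pointwise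

noncomputable section

section Polyhedral

variable {X : Type*} [NormedAddCommGroup X] [NormedSpace ℝ X]

lemma propertyStar_of_finite_setOf_lt {B : Set (StrongDual ℝ X)}
    (h : ∀ x : X, sSup ((fun f : StrongDual ℝ X => f x) '' B) = 1 →
      ∃ η > 0, {b ∈ B | 1 - η < b x}.Finite) :
    PropertyStar B := by
  intro g hg x hx
  obtain ⟨η, hη, hfin⟩ := h x hx
  by_contra! hgx
  exact hg _ (isOpen_Ioi.preimage (WeakDual.eval_continuous x))
    (show 1 - η < g x by linarith) hfin

lemma IsWeakStarLimitPoint.mono {F G : Set (StrongDual ℝ X)} {g : StrongDual ℝ X}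
    (hg : IsWeakStarLimitPoint F g) (hFG : F ⊆ G) : IsWeakStarLimitPoint G g :=
  fun U hU hgU => (hg U hU hgU).mono fun _ hf => ⟨hFG hf.1, hf.2⟩

lemma exists_isWeakStarLimitPoint_of_infinite {E : Set (StrongDual ℝ X)} (hE : E.Infinite)
    {M : ℝ} (hM : ∀ b ∈ E, ‖b‖ ≤ M) : ∃ g, IsWeakStarLimitPoint E g := by
  obtain ⟨ψ, -, hψ⟩ := (hE.image StrongDual.toWeakDual.injective.injOn)
    |>.exists_accPt_cofinite_inf_principal_of_subset_isCompact
      (WeakDual.isCompact_closedBall 0 M) (by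
        rintro _ ⟨b, hb, rfl⟩
        exact mem_closedBall_zero_iff.2 (hM b hb))
  refine ⟨WeakDual.toStrongDual ψ, fun U hU hψU => Infinite.of_image StrongDual.toWeakDual ?_⟩
  have hinf : (U ∩ StrongDual.toWeakDual '' E).Infinite := by
    refine cofinite_inf_principal_neBot_iff.1 (NeBot.mono hψ (le_inf (inf_le_right.trans
      inf_le_left) (le_principal_iff.2 (inter_mem ?_ ?_))))
    · exact mem_inf_of_left (mem_nhdsWithin_of_mem_nhds (hU.mem_nhds hψU))
    · exact mem_inf_of_right (mem_inf_of_right (mem_principal_self _))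
  refine hinf.mono ?_
  rintro _ ⟨hU, b, hb, rfl⟩
  exact ⟨b, ⟨hb, hU⟩, rfl⟩

variable {ν : Seminorm ℝ X} {B : Set (StrongDual ℝ X)}

lemma IsBoundaryFor.norm_le (hB : IsBoundaryFor ν B) {C : ℝ} (hC : 0 ≤ C)
    (hνC : ∀ x, ν x ≤ C * ‖x‖) {b : StrongDual ℝ X} (hb : b ∈ B) : ‖b‖ ≤ C := by
  refine b.opNorm_le_bound hC fun x => abs_le.2 ⟨?_, (hB.1 b hb x).trans (hνC x)⟩
  have := (hB.1 b hb (-x)).trans (hνC (-x))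
  rw [map_neg, norm_neg] at this
  linarith

lemma IsBoundaryFor.sSup_eq_one (hB : IsBoundaryFor ν B) {x : X} (hx : ν x = 1) :
    sSup ((fun f : StrongDual ℝ X => f x) '' B) = 1 := by
  obtain ⟨b, hb, hbx⟩ := hB.2 x hx
  refine IsGreatest.csSup_eq ⟨⟨b, hb, hbx⟩, ?_⟩
  rintro _ ⟨f, hf, rfl⟩
  exact hx ▸ hB.1 f hf x

lemma Seminorm.continuous_of_le_mul_norm {C : ℝ} (hνC : ∀ x, ν x ≤ C * ‖x‖) :
    Continuous ν := by
  refine Seminorm.continuous_of_continuousAt_zero ?_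
  rw [ContinuousAt, map_zero]
  refine squeeze_zero (fun x => apply_nonneg ν x) hνC ?_
  simpa using (continuous_norm.tendsto (0 : X)).const_mul C

lemma isCompact_setOf_mem_and_le_one (Y : Submodule ℝ X) [FiniteDimensional ℝ Y] {c C : ℝ}
    (hc : 0 < c) (hcν : ∀ x, c * ‖x‖ ≤ ν x) (hνC : ∀ x, ν x ≤ C * ‖x‖) :
    IsCompact {y | y ∈ Y ∧ ν y ≤ 1} := by
  refine ((isCompact_closedBall (0 : Y) c⁻¹).image continuous_subtype_val).of_isClosed_subset
    ((Submodule.closed_of_finiteDimensional Y).inter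
      (isClosed_le (Seminorm.continuous_of_le_mul_norm hνC) continuous_const)) ?_
  rintro y ⟨hyY, hy⟩
  refine ⟨⟨y, hyY⟩, ?_, rfl⟩
  rw [mem_closedBall_zero_iff, Submodule.coe_norm]
  calc ‖y‖ = c⁻¹ * (c * ‖y‖) := by field_simp
    _ ≤ c⁻¹ * 1 := by gcongr; exact (hcν y).trans hy
    _ = c⁻¹ := mul_one _

def normingSet (ν : Seminorm ℝ X) (B : Set (StrongDual ℝ X)) (Y : Submodule ℝ X) :
    Set (StrongDual ℝ X) :=
  {b ∈ B | ∃ y ∈ Y, ν y = 1 ∧ b y = 1}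

lemma IsBoundaryFor.setOf_le_one_eq (hB : IsBoundaryFor ν B) (Y : Submodule ℝ X) :
    {y | y ∈ Y ∧ ν y ≤ 1} = {y | y ∈ Y ∧ ∀ b ∈ normingSet ν B Y, b y ≤ 1} := by
  ext y
  refine and_congr_right fun hyY => ⟨fun hy b hb => (hB.1 b hb.1 y).trans hy, fun hy => ?_⟩
  by_contra! hlt
  have hpos : 0 < ν y := one_pos.trans hlt
  have hunit : ν ((ν y)⁻¹ • y) = 1 := by
    rw [map_smul_eq_mul, Real.norm_eq_abs, abs_inv, abs_of_pos hpos, inv_mul_cancel₀ hpos.ne']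
  obtain ⟨b, hb, hby⟩ := hB.2 _ hunit
  have := hy b ⟨hb, _, Y.smul_mem _ hyY, hunit, hby⟩
  rw [map_smul, smul_eq_mul, inv_mul_eq_one₀ hpos.ne'] at hby
  linarith

lemma exists_isOpen_forall_apply_lt_one {S : Set X} (hS : IsCompact S) {g : StrongDual ℝ X}
    (hg : ∀ y ∈ S, g y < 1) {M : ℝ} (hM : 0 < M) :
    ∃ U : Set (WeakDual ℝ X), IsOpen U ∧ StrongDual.toWeakDual g ∈ U ∧
      ∀ b : StrongDual ℝ X, StrongDual.toWeakDual b ∈ U → ‖b‖ ≤ M → ∀ y ∈ S, b y < 1 := by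
  rcases S.eq_empty_or_nonempty with rfl | hne
  · exact ⟨univ, isOpen_univ, mem_univ _, fun _ _ _ _ h => h.elim⟩
  obtain ⟨y₁, hy₁, hmax⟩ := hS.exists_isMaxOn hne g.continuous.continuousOn
  set η := 1 - g y₁
  have hη : 0 < η := sub_pos.2 (hg y₁ hy₁)
  obtain ⟨t, htS, ht, hcover⟩ := hS.finite_cover_balls (e := η / (2 * M)) (by positivity)
  refine ⟨⋂ y ∈ t, {φ | φ y < 1 - η / 2},
    ht.isOpen_biInter fun y _ => isOpen_lt (WeakDual.eval_continuous y) continuous_const,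
    mem_iInter₂.2 fun y hy => show g y < 1 - η / 2 by linarith [isMaxOn_iff.1 hmax y (htS hy)],
    fun b hbU hbM y hy => ?_⟩
  obtain ⟨y', hy't, hyy'⟩ := mem_iUnion₂.1 (hcover hy)
  have hby' : b y' < 1 - η / 2 := mem_iInter₂.1 hbU y' hy't
  have hdiff : b y - b y' ≤ η / 2 := calc
    b y - b y' = b (y - y') := (map_sub b y y').symm
    _ ≤ ‖b‖ * ‖y - y'‖ := (Real.le_norm_self _).trans (b.le_opNorm _)
    _ ≤ M * (η / (2 * M)) :=
      mul_le_mul hbM (mem_ball_iff_norm.1 hyy').le (norm_nonneg _) hM.le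
    _ = η / 2 := by field_simp
  linarith

lemma finite_normingSet {c C : ℝ} (hc : 0 < c) (hcν : ∀ x, c * ‖x‖ ≤ ν x) (hC : 0 < C)
    (hνC : ∀ x, ν x ≤ C * ‖x‖) (hB : IsBoundaryFor ν B) (hstar : PropertyStar B)
    (Y : Submodule ℝ X) [FiniteDimensional ℝ Y] : (normingSet ν B Y).Finite := by
  refine not_infinite.1 fun hE => ?_
  obtain ⟨g, hg⟩ :=
    exists_isWeakStarLimitPoint_of_infinite hE fun b hb => hB.norm_le hC.le hνC hb.1
  have hS : IsCompact {y | y ∈ Y ∧ ν y = 1} :=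
    (isCompact_setOf_mem_and_le_one Y hc hcν hνC).of_isClosed_subset
      ((Submodule.closed_of_finiteDimensional Y).inter
        (isClosed_eq (Seminorm.continuous_of_le_mul_norm hνC) continuous_const))
      fun y hy => ⟨hy.1, hy.2.le⟩
  obtain ⟨U, hU, hgU, hUlt⟩ := exists_isOpen_forall_apply_lt_one hS
    (fun y hy => hstar g (hg.mono fun b hb => hb.1) y (hB.sSup_eq_one hy.2)) hC
  obtain ⟨b, ⟨hbB, y, hyY, hy, hby⟩, hbU⟩ := (hg U hU hgU).nonempty
  exact (hUlt b hbU (hB.norm_le hC.le hνC hbB) y ⟨hyY, hy⟩).ne hby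

lemma finite_extremePoints_setOf_forall_le_one (Y : Submodule ℝ X)
    {E : Set (StrongDual ℝ X)} (hE : E.Finite) :
    (({y | y ∈ Y ∧ ∀ b ∈ E, b y ≤ 1} : Set X).extremePoints ℝ).Finite := by
  set P : Set X := {y | y ∈ Y ∧ ∀ b ∈ E, b y ≤ 1}
  -- an extreme point of `P` is determined by the constraints that are active at it
  refine Finite.of_finite_image (f := fun e => {b ∈ E | b e = 1})
    (hE.finite_subsets.subset <| image_subset_iff.2 fun _ _ => sep_subset _ _) ?_
  intro e₁ he₁ e₂ he₂ hact
  by_contra hne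
  set d := e₁ - e₂
  have hY : ∀ t : ℝ, e₁ + t • d ∈ Y := fun t =>
    Y.add_mem he₁.1.1 (Y.smul_mem t (Y.sub_mem he₁.1.1 he₂.1.1))
  have hbd : ∀ b ∈ E, ∀ᶠ t in 𝓝 (0 : ℝ), b (e₁ + t • d) ≤ 1 ∧ b (e₁ + (-t) • d) ≤ 1 := by
    intro b hb
    by_cases h1 : b e₁ = 1
    · have h2 : b e₂ = 1 := ((Set.ext_iff.1 hact b).1 ⟨hb, h1⟩).2
      exact Eventually.of_forall fun t => by simp [d, h1, h2]
    · have hlt : b e₁ < 1 := lt_of_le_of_ne (he₁.1.2 b hb) h1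
      have hcont : Continuous fun t : ℝ => b (e₁ + t • d) := by fun_prop
      filter_upwards [(hcont.tendsto' 0 _ (by simp)).eventually_lt_const hlt,
        ((hcont.comp continuous_neg).tendsto' 0 _ (by simp)).eventually_lt_const hlt]
        with t ht₁ ht₂
      exact ⟨ht₁.le, ht₂.le⟩
  obtain ⟨t, hPt, ht⟩ := ((((eventually_all_finite hE).2 hbd).filter_mono
    nhdsWithin_le_nhds).and self_mem_nhdsWithin).exists (f := 𝓝[>] (0 : ℝ))
  have hseg : e₁ ∈ openSegment ℝ (e₁ + t • d) (e₁ + (-t) • d) :=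
    ⟨1 / 2, 1 / 2, by norm_num, by norm_num, by norm_num, by module⟩
  have hfix := ((mem_extremePoints.1 he₁).2 _ ⟨hY t, fun b hb => (hPt b hb).1⟩
    _ ⟨hY (-t), fun b hb => (hPt b hb).2⟩ hseg).1
  rcases smul_eq_zero.1 (add_eq_left.1 hfix) with h0 | hd
  · exact ht.ne' h0
  · exact hne (sub_eq_zero.1 hd)

theorem IsBoundaryFor.isPolyhedralNorm (hν : IsEquivNorm ν) (hB : IsBoundaryFor ν B)
    (hstar : PropertyStar B) : IsPolyhedralNorm ν := by
  obtain ⟨c, C, hc, hcC⟩ := hν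
  have hνC : ∀ x, ν x ≤ max C 1 * ‖x‖ := fun x =>
    (hcC x).2.trans (mul_le_mul_of_nonneg_right (le_max_left _ _) (norm_nonneg x))
  intro Y hY
  have hP := isCompact_setOf_mem_and_le_one Y hc (fun x => (hcC x).1) hνC
  have hconv : Convex ℝ {y | y ∈ Y ∧ ν y ≤ 1} := by
    have hball : {y | y ∈ Y ∧ ν y ≤ 1} = (Y : Set X) ∩ ν.closedBall 0 1 := by
      ext y
      simp
    exact hball ▸ Y.convex.inter (ν.convex_closedBall 0 1)
  have hext : ({y | y ∈ Y ∧ ν y ≤ 1}.extremePoints ℝ).Finite := by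
    rw [hB.setOf_le_one_eq Y]
    exact finite_extremePoints_setOf_forall_le_one Y <| finite_normingSet hc
      (fun x => (hcC x).1) (lt_max_of_lt_right one_pos) hνC hB hstar Y
  refine ⟨_, hext, ?_⟩
  rw [← (hext.isClosed_convexHull ℝ).closure_eq, closure_convexHull_extremePoints hP hconv]

end Polyhedral

section TernaryWeight

variable {α : Type*}

/-- Base `3` rather than `2` so that the first index where the memberships differ outweighs all
later ones (`ternaryWeight_add_le`). -/
def ternaryWeight (A : ℕ → Set α) (z : α) : ℝ :=
  ∑' l, (A l).indicator (fun _ => (3⁻¹ : ℝ) ^ l) z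

lemma indicator_geometric_mem_Icc (A : ℕ → Set α) (z : α) (l : ℕ) :
    (A l).indicator (fun _ => (3⁻¹ : ℝ) ^ l) z ∈ Icc 0 ((3⁻¹ : ℝ) ^ l) :=
  ⟨indicator_nonneg (fun _ _ => by positivity) z,
    indicator_le_self' (fun _ _ => by positivity) z⟩

lemma summable_indicator_geometric (A : ℕ → Set α) (z : α) :
    Summable fun l => (A l).indicator (fun _ => (3⁻¹ : ℝ) ^ l) z :=
  .of_nonneg_of_le (fun l => (indicator_geometric_mem_Icc A z l).1)
    (fun l => (indicator_geometric_mem_Icc A z l).2)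
    (summable_geometric_of_lt_one (by norm_num) (by norm_num))

lemma ternaryWeight_mem_Icc (A : ℕ → Set α) (z : α) : ternaryWeight A z ∈ Icc 0 (3 / 2) := by
  refine ⟨tsum_nonneg fun l => (indicator_geometric_mem_Icc A z l).1, ?_⟩
  calc ternaryWeight A z ≤ ∑' l : ℕ, (3⁻¹ : ℝ) ^ l :=
        (summable_indicator_geometric A z).tsum_le_tsum
          (fun l => (indicator_geometric_mem_Icc A z l).2)
          (summable_geometric_of_lt_one (by norm_num) (by norm_num))
    _ = 3 / 2 := by rw [tsum_geometric_of_lt_one (by norm_num) (by norm_num)]; norm_num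

lemma ternaryWeight_add_le {A : ℕ → Set α} {x z : α} {m : ℕ}
    (hlt : ∀ l < m, x ∈ A l → z ∈ A l) (hxm : x ∉ A m) (hzm : z ∈ A m) :
    ternaryWeight A x + (3⁻¹ : ℝ) ^ m / 2 ≤ ternaryWeight A z := by
  set a := fun y l => (A l).indicator (fun _ => (3⁻¹ : ℝ) ^ l) y
  have ha : ∀ y, Summable (a y) := summable_indicator_geometric A
  have hhead : ∑ l ∈ Finset.range m, a x l ≤ ∑ l ∈ Finset.range m, a z l := by
    refine Finset.sum_le_sum fun l hl => ?_
    by_cases hx : x ∈ A l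
    · simp only [a, indicator_of_mem hx, indicator_of_mem (hlt l (Finset.mem_range.1 hl) hx),
        le_refl]
    · simpa only [a, indicator_of_notMem hx] using (indicator_geometric_mem_Icc A z l).1
  have htail : ∑' l, a x (l + (m + 1)) ≤ (3⁻¹ : ℝ) ^ m / 2 := by
    calc ∑' l, a x (l + (m + 1)) ≤ ∑' l : ℕ, (3⁻¹ : ℝ) ^ l * 3⁻¹ ^ (m + 1) :=
          ((summable_nat_add_iff (m + 1)).2 (ha x)).tsum_le_tsum
            (fun l => by rw [← pow_add]; exact (indicator_geometric_mem_Icc A x _).2)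
            ((summable_geometric_of_lt_one (by norm_num) (by norm_num)).mul_right _)
      _ = (3⁻¹ : ℝ) ^ m / 2 := by
        rw [tsum_mul_right, tsum_geometric_of_lt_one (by norm_num) (by norm_num), pow_succ]
        ring
  have hztail : 0 ≤ ∑' l, a z (l + (m + 1)) :=
    tsum_nonneg fun l => (indicator_geometric_mem_Icc A z _).1
  have hxm' : a x m = 0 := indicator_of_notMem hxm _
  have hzm' : a z m = (3⁻¹ : ℝ) ^ m := indicator_of_mem hzm _
  change ∑' l, a x l + _ ≤ ∑' l, a z l
  rw [← (ha x).sum_add_tsum_nat_add (m + 1), ← (ha z).sum_add_tsum_nat_add (m + 1),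
    Finset.sum_range_succ, Finset.sum_range_succ]
  linarith

end TernaryWeight

section StrictPeaks

variable {K : Type*} [TopologicalSpace K]

def HasStrictPeaks (w : K → ℝ) : Prop :=
  ∀ z, ∃ δ > 0, ∀ᶠ x in 𝓝[≠] z, w x ≤ w z - δ

lemma eventually_notMem_closure_of_discreteTopology [T1Space K] {S : Set K}
    [hS : DiscreteTopology S] {z : K} (hz : z ∈ S) : ∀ᶠ x in 𝓝[≠] z, x ∉ closure S := by
  have hiso : 𝓝[≠] z ⊓ 𝓟 S = ⊥ := discreteTopology_subtype_iff.1 hS z hz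
  have hacc : z ∉ derivedSet S := fun h => (h : AccPt z (𝓟 S)).ne hiso
  filter_upwards [inf_principal_eq_bot.1 hiso,
    nhdsWithin_le_nhds ((isClosed_derivedSet S).isOpen_compl.mem_nhds hacc)] with x hxS hxacc
  rw [closure_eq_self_union_derivedSet]
  exact fun h => h.elim hxS hxacc

/-- A point of `D m` is isolated in `closure (D m)`, so the weight built from the closures drops
by at least `3⁻ᵐ / 2` when one leaves it. -/
theorem exists_hasStrictPeaks_of_sigmaDiscrete [T1Space K] (D : ℕ → Set K)
    (hdisc : ∀ n, DiscreteTopology (D n)) (hcover : (Set.univ : Set K) = ⋃ n, D n)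
    {c : ℝ} (hc : 0 < c) :
    ∃ w : K → ℝ, (∀ z, 1 ≤ w z ∧ w z ≤ 1 + c) ∧ HasStrictPeaks w := by
  set h := ternaryWeight fun n => closure (D n)
  refine ⟨fun z => 1 + 2 * c / 3 * h z, fun z => ?_, fun z => ?_⟩
  · have := ternaryWeight_mem_Icc (fun n => closure (D n)) z
    constructor <;> nlinarith [this.1, this.2]
  · obtain ⟨m, hzm⟩ := mem_iUnion.1 (hcover ▸ mem_univ z)
    have hfront : ∀ l ∈ Finset.range m,
        ∀ᶠ x in 𝓝 z, x ∈ closure (D l) → z ∈ closure (D l) := fun l _ => by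
      by_cases hz : z ∈ closure (D l)
      · exact Eventually.of_forall fun _ _ => hz
      · filter_upwards [isClosed_closure.isOpen_compl.mem_nhds hz] with x hx h using absurd h hx
    refine ⟨2 * c / 3 * ((3⁻¹ : ℝ) ^ m / 2), by positivity, ?_⟩
    filter_upwards [eventually_notMem_closure_of_discreteTopology (hS := hdisc m) hzm,
      nhdsWithin_le_nhds ((Finset.range m).eventually_all.2 hfront)] with x hxm hx
    have := ternaryWeight_add_le (fun l hl => hx l (Finset.mem_range.2 hl)) hxm (subset_closure hzm)
    nlinarith

end StrictPeaks

section WeightedSupNorm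

variable {K : Type*} [TopologicalSpace K] [CompactSpace K]

lemma finite_setOf_lt_of_forall_eventually_le {φ : K → ℝ} {s : ℝ}
    (h : ∀ z, ∃ η > 0, ∀ᶠ x in 𝓝[≠] z, φ x ≤ s - η) : ∃ η > 0, {x | s - η < φ x}.Finite := by
  choose η hη hφ using h
  obtain ⟨t, ht⟩ := CompactSpace.elim_nhds_subcover (fun z => {x | x ≠ z → φ x ≤ s - η z})
    fun z => eventually_nhdsWithin_iff.1 (hφ z)
  obtain ⟨η₀, hη₀, hη₀_pos⟩ := ((t.eventually_all.2 fun z _ =>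
    nhdsWithin_le_nhds (eventually_le_nhds (hη z))).and self_mem_nhdsWithin).exists
      (f := 𝓝[>] (0 : ℝ))
  refine ⟨η₀, hη₀_pos, t.finite_toSet.subset fun x hx => ?_⟩
  obtain ⟨z, hz, hxz⟩ := mem_iUnion₂.1
    (by rw [ht]; trivial : x ∈ ⋃ z ∈ t, {y | y ≠ z → φ y ≤ s - η z})
  by_contra hxt
  have := hxz fun heq => hxt (heq ▸ hz)
  have hx' : s - η₀ < φ x := hx
  linarith [hη₀ z hz]

lemma HasStrictPeaks.finite_setOf_lt {w : K → ℝ} (hw : HasStrictPeaks w) (f : C(K, ℝ))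
    {s : ℝ} (hs : 0 < s) (hle : ∀ x, w x * |f x| ≤ s) :
    ∃ η > 0, {x | s - η < w x * |f x|}.Finite := by
  refine finite_setOf_lt_of_forall_eventually_le fun z => ?_
  obtain ⟨δ, hδ, hwz⟩ := hw z
  have hlt : (w z - δ) * |f z| < s := by
    rcases (abs_nonneg (f z)).eq_or_lt with h0 | hpos
    · rw [← h0, mul_zero]; exact hs
    · nlinarith [hle z]
  refine ⟨(s - (w z - δ) * |f z|) / 2, by linarith, ?_⟩
  have hcont : Continuous fun x => (w z - δ) * |f x| := by fun_prop
  filter_upwards [hwz, nhdsWithin_le_nhds ((hcont.tendsto z).eventually_lt_const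
    (show (w z - δ) * |f z| < s - (s - (w z - δ) * |f z|) / 2 by linarith))] with x hwx hx
  nlinarith [abs_nonneg (f x)]

def weightedSupNorm (w : K → ℝ) : Seminorm ℝ C(K, ℝ) :=
  ⨆ x, (w x).toNNReal • (normSeminorm ℝ ℝ).comp (ContinuousMap.evalCLM ℝ x).toLinearMap

variable {w : K → ℝ} {M : ℝ}

lemma mul_abs_le_mul_norm (hw0 : ∀ x, 0 ≤ w x) (hwM : ∀ x, w x ≤ M) (f : C(K, ℝ)) (x : K) :
    w x * |f x| ≤ M * ‖f‖ :=
  mul_le_mul (hwM x) (f.norm_coe_le_norm x) (abs_nonneg _) ((hw0 x).trans (hwM x))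

lemma weightedSupNorm_apply (hw0 : ∀ x, 0 ≤ w x) (hwM : ∀ x, w x ≤ M) (f : C(K, ℝ)) :
    weightedSupNorm w f = ⨆ x, w x * |f x| := by
  rw [weightedSupNorm, Seminorm.iSup_apply]
  · simp [NNReal.smul_def, Real.coe_toNNReal _ (hw0 _)]
  · refine Seminorm.bddAbove_range_iff.2 fun f => ⟨M * ‖f‖, forall_mem_range.2 fun x => ?_⟩
    simpa [NNReal.smul_def, Real.coe_toNNReal _ (hw0 x)] using mul_abs_le_mul_norm hw0 hwM f x

lemma mul_abs_le_weightedSupNorm (hw0 : ∀ x, 0 ≤ w x) (hwM : ∀ x, w x ≤ M) (f : C(K, ℝ))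
    (x : K) : w x * |f x| ≤ weightedSupNorm w f := by
  rw [weightedSupNorm_apply hw0 hwM]
  exact le_ciSup ⟨M * ‖f‖, forall_mem_range.2 (mul_abs_le_mul_norm hw0 hwM f)⟩ x

lemma weightedSupNorm_le (hw0 : ∀ x, 0 ≤ w x) (hwM : ∀ x, w x ≤ M) {f : C(K, ℝ)} {a : ℝ}
    (ha : 0 ≤ a) (h : ∀ x, w x * |f x| ≤ a) : weightedSupNorm w f ≤ a := by
  rw [weightedSupNorm_apply hw0 hwM]
  exact Real.iSup_le h ha

lemma norm_le_weightedSupNorm (hw1 : ∀ x, 1 ≤ w x) (hwM : ∀ x, w x ≤ M) (f : C(K, ℝ)) :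
    ‖f‖ ≤ weightedSupNorm w f := by
  have hw0 x : 0 ≤ w x := zero_le_one.trans (hw1 x)
  refine (f.norm_le (apply_nonneg _ _)).2 fun x => ?_
  calc ‖f x‖ ≤ w x * |f x| := by
        rw [Real.norm_eq_abs]; exact le_mul_of_one_le_left (abs_nonneg _) (hw1 x)
    _ ≤ weightedSupNorm w f := mul_abs_le_weightedSupNorm hw0 hwM f x

lemma weightedSupNorm_le_mul_norm (hw0 : ∀ x, 0 ≤ w x) (hwM : ∀ x, w x ≤ M) (hM : 0 ≤ M)
    (f : C(K, ℝ)) : weightedSupNorm w f ≤ M * ‖f‖ :=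
  weightedSupNorm_le hw0 hwM (by positivity) (mul_abs_le_mul_norm hw0 hwM f)

lemma HasStrictPeaks.exists_mul_abs_eq_weightedSupNorm (hw : HasStrictPeaks w)
    (hw0 : ∀ x, 0 ≤ w x) (hwM : ∀ x, w x ≤ M) {f : C(K, ℝ)} (hf : 0 < weightedSupNorm w f) :
    ∃ x, w x * |f x| = weightedSupNorm w f := by
  set s := weightedSupNorm w f
  obtain ⟨η, hη, hfin⟩ := hw.finite_setOf_lt f hf (mul_abs_le_weightedSupNorm hw0 hwM f)
  have hne : {x | s - η < w x * |f x|}.Nonempty := by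
    by_contra! hempty
    have : s ≤ max (s - η) 0 := weightedSupNorm_le hw0 hwM (le_max_right _ _) fun x =>
      le_max_of_le_left (not_lt.1 fun hx => hempty.subset hx)
    linarith [max_lt (show s - η < s by linarith) hf]
  obtain ⟨x₀, hx₀, hmax⟩ := exists_max_image _ (fun x => w x * |f x|) hfin hne
  have hx₀' : s - η < w x₀ * |f x₀| := hx₀
  refine ⟨x₀, le_antisymm (mul_abs_le_weightedSupNorm hw0 hwM f x₀) ?_⟩
  refine weightedSupNorm_le hw0 hwM (mul_nonneg (hw0 x₀) (abs_nonneg _)) fun x => ?_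
  by_cases hx : s - η < w x * |f x|
  · exact hmax x hx
  · linarith [not_lt.1 hx]

end WeightedSupNorm

section WeightedEvaluations

variable {K : Type*} [TopologicalSpace K] {w : K → ℝ} {M : ℝ}

def weightedEvaluations (w : K → ℝ) : Set (StrongDual ℝ C(K, ℝ)) :=
  {b | ∃ x, b = w x • ContinuousMap.evalCLM ℝ x ∨ b = -(w x • ContinuousMap.evalCLM ℝ x)}

lemma apply_le_mul_abs_of_eq_or_eq {x : K} (hw0 : 0 ≤ w x) {b : StrongDual ℝ C(K, ℝ)}
    (hb : b = w x • ContinuousMap.evalCLM ℝ x ∨ b = -(w x • ContinuousMap.evalCLM ℝ x))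
    (f : C(K, ℝ)) : b f ≤ w x * |f x| := by
  rcases hb with rfl | rfl
  · exact mul_le_mul_of_nonneg_left (le_abs_self _) hw0
  · simpa [← mul_neg] using mul_le_mul_of_nonneg_left (neg_le_abs (f x)) hw0

lemma exists_mem_weightedEvaluations_apply_eq (f : C(K, ℝ)) (x : K) :
    ∃ b ∈ weightedEvaluations w, b f = w x * |f x| := by
  rcases le_or_gt 0 (f x) with hfx | hfx
  · exact ⟨_, ⟨x, .inl rfl⟩, by simp [abs_of_nonneg hfx]⟩
  · exact ⟨_, ⟨x, .inr rfl⟩, by simp [abs_of_neg hfx]⟩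

lemma isBoundaryFor_weightedEvaluations [CompactSpace K] (hw : HasStrictPeaks w) (hw0 : ∀ x, 0 ≤ w x)
    (hwM : ∀ x, w x ≤ M) : IsBoundaryFor (weightedSupNorm w) (weightedEvaluations w) := by
  refine ⟨fun b ⟨x, hb⟩ f => (apply_le_mul_abs_of_eq_or_eq (hw0 x) hb f).trans
    (mul_abs_le_weightedSupNorm hw0 hwM f x), fun f hf => ?_⟩
  obtain ⟨x, hx⟩ := hw.exists_mul_abs_eq_weightedSupNorm hw0 hwM (hf ▸ one_pos)
  obtain ⟨b, hb, hbf⟩ := exists_mem_weightedEvaluations_apply_eq (w := w) f x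
  exact ⟨b, hb, hbf.trans (hx.trans hf)⟩

lemma propertyStar_weightedEvaluations [CompactSpace K] (hw : HasStrictPeaks w) (hw0 : ∀ x, 0 ≤ w x)
    (hwM : ∀ x, w x ≤ M) : PropertyStar (weightedEvaluations w) := by
  refine propertyStar_of_finite_setOf_lt fun f hf => ?_
  have hbdd : BddAbove ((fun b : StrongDual ℝ C(K, ℝ) => b f) '' weightedEvaluations w) :=
    ⟨weightedSupNorm w f, forall_mem_image.2 fun b hb =>
      (isBoundaryFor_weightedEvaluations hw hw0 hwM).1 b hb f⟩
  have hle : ∀ x, w x * |f x| ≤ 1 := fun x => by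
    obtain ⟨b, hb, hbf⟩ := exists_mem_weightedEvaluations_apply_eq (w := w) f x
    exact hf ▸ hbf ▸ le_csSup hbdd (mem_image_of_mem _ hb)
  obtain ⟨η, hη, hfin⟩ := hw.finite_setOf_lt f one_pos hle
  refine ⟨η, hη, ((hfin.image fun x => w x • ContinuousMap.evalCLM ℝ x).union
    (hfin.image fun x => -(w x • ContinuousMap.evalCLM ℝ x))).subset ?_⟩
  rintro b ⟨⟨x, hb⟩, hbf⟩
  have hx : x ∈ {x | 1 - η < w x * |f x|} :=
    hbf.trans_le (apply_le_mul_abs_of_eq_or_eq (hw0 x) hb f)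
  rcases hb with rfl | rfl
  · exact .inl ⟨x, hx, rfl⟩
  · exact .inr ⟨x, hx, rfl⟩

end WeightedEvaluations

theorem stmt17 {K : Type*} [TopologicalSpace K] [CompactSpace K] [T2Space K]
    (D : ℕ → Set K) (hdisc : ∀ n, DiscreteTopology (D n))
    (hcover : (Set.univ : Set K) = ⋃ n, D n)
    (ε : ℝ) (hε : 0 < ε) :
    ∃ ν : Seminorm ℝ C(K, ℝ),
      (∀ f : C(K, ℝ), (1 - ε) * ‖f‖ ≤ ν f ∧ ν f ≤ (1 + ε) * ‖f‖) ∧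
      IsPolyhedralNorm (fun f => ν f) ∧
      ∃ B : Set (StrongDual ℝ C(K, ℝ)), IsBoundaryFor (fun f => ν f) B ∧ PropertyStar B := by
  obtain ⟨w, hw, hpeaks⟩ := exists_hasStrictPeaks_of_sigmaDiscrete D hdisc hcover hε
  have hw1 x : 1 ≤ w x := (hw x).1
  have hw0 x : 0 ≤ w x := zero_le_one.trans (hw1 x)
  have hwM x : w x ≤ 1 + ε := (hw x).2
  have hlower f : ‖f‖ ≤ weightedSupNorm w f := norm_le_weightedSupNorm hw1 hwM f
  have hupper f : weightedSupNorm w f ≤ (1 + ε) * ‖f‖ :=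
    weightedSupNorm_le_mul_norm hw0 hwM (by positivity) f
  have hB := isBoundaryFor_weightedEvaluations hpeaks hw0 hwM
  have hstar := propertyStar_weightedEvaluations hpeaks hw0 hwM
  refine ⟨weightedSupNorm w, fun f => ⟨?_, hupper f⟩,
    hB.isPolyhedralNorm ⟨1, 1 + ε, one_pos, fun f => ⟨by simpa using hlower f, hupper f⟩⟩ hstar,
    _, hB, hstar⟩
  nlinarith [hlower f, norm_nonneg f]
end
end

section
/- Let K be a compact Hausdorff space and suppose C(K) (with the canonical supremum norm) admits a boundary that is covered by E = ⋃_{n=0}^∞ E_n, where each E_n ⊂ C(K)* is w*-LRC, and E is w*-K_σ (a countable union of weak-*-compact sets). Then K is σ-discrete, i.e., K is a countable union of subsets each of which is discrete in its relative topology. -/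
open NormedSpace Filter Set Topology Pointwise

noncomputable section

/-!
Write `E = ⋃ n, E n` as a countable union of weak-* compact sets `C m`. For each point `x`, some
`C m` contains functionals of the boundary `B` concentrated on arbitrarily small neighbourhoods of
`x`: otherwise choose for every `m` a bad neighbourhood `V m` and a Urysohn function `u m` equal to
`1` at `x` and vanishing off `V m`. The function `g = 1 - ∑ 2^-(m+1) (1 - u m)` has norm one, and
any functional of the dual unit ball with `μ g = 1` has `μ (u m) = 1` for every `m`; the
functional of `B` norming `g` lies in some `C m` and is thus concentrated on `V m`, a
contradiction. Those functionals converge weak-* to the Dirac functional `δ x`, so `δ x ∈ C m ⊆ E`.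

Hence `K = ⋃ n, {x | δ x ∈ E n}`. Each piece is discrete: distinct Dirac functionals are at norm
distance at least `1`, and a weak-* neighbourhood of `δ x` meets `E n` in a relatively norm-compact
set, which can only hold finitely many of them.
-/

open TopologicalSpace

lemma StrongDual.norm_le_one_of_forall_apply_le_norm {X : Type*} [NormedAddCommGroup X]
    [NormedSpace ℝ X] {φ : StrongDual ℝ X} (h : ∀ x, φ x ≤ ‖x‖) : ‖φ‖ ≤ 1 :=
  φ.opNorm_le_bound zero_le_one fun x => by
    rw [one_mul, Real.norm_eq_abs, abs_le]
    exact ⟨by linarith [show -φ x ≤ ‖x‖ by simpa using h (-x)], h x⟩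

lemma Metric.IsSeparated.finite_of_isCompact_closure {X : Type*} [PseudoEMetricSpace X]
    {ε : NNReal} {A C : Set X} (hε : ε ≠ 0) (hC : IsSeparated ε C) (hCA : C ⊆ A)
    (hA : IsCompact (closure A)) : C.Finite := by
  obtain ⟨N, -, hN, hcover⟩ := exists_finite_isCover_of_isCompact_closure (ε := ε / 2)
    (by simpa using hε) hA
  rw [← Set.encard_lt_top_iff]
  calc C.encard ≤ packingNumber (2 * (ε / 2)) A := by
        rw [mul_div_cancel₀ _ two_ne_zero]; exact hC.encard_le_packingNumber hCA
    _ ≤ externalCoveringNumber (ε / 2) A := packingNumber_two_mul_le_externalCoveringNumber _ _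
    _ ≤ N.encard := hcover.externalCoveringNumber_le_encard
    _ < ⊤ := hN.encard_lt_top

lemma discreteTopology_of_finite_inter_mem_nhds {X : Type*} [TopologicalSpace X] [T1Space X]
    {D : Set X} (h : ∀ x ∈ D, ∃ W ∈ 𝓝 x, (D ∩ W).Finite) : DiscreteTopology D := by
  refine discreteTopology_iff_isOpen_singleton.2 fun ⟨x, hx⟩ => ?_
  obtain ⟨W, hW, hfin⟩ := h x hx
  refine isOpen_singleton_of_finite_mem_nhds _ (s := Subtype.val ⁻¹' W)
    (continuous_subtype_val.continuousAt.preimage_mem_nhds hW) ?_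
  exact (hfin.preimage Subtype.val_injective.injOn).subset fun y hy => ⟨y.2, hy⟩

section DualUnitBall

variable {K : Type*} [TopologicalSpace K]

def dirac (x : K) : StrongDual ℝ C(K, ℝ) := ContinuousMap.evalCLM ℝ x

@[simp]
lemma dirac_apply (x : K) (f : C(K, ℝ)) : dirac x f = f x := rfl

variable [CompactSpace K]

/-- For `μ` in the dual unit ball, this says that `μ` is a probability measure carried by `V`. -/
def ConcentratesOn (μ : StrongDual ℝ C(K, ℝ)) (V : Set K) : Prop :=
  ∃ u : C(K, ℝ), (∀ y, u y ∈ Icc (0 : ℝ) 1) ∧ EqOn u 0 Vᶜ ∧ μ u = 1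

variable {μ : StrongDual ℝ C(K, ℝ)} {u : C(K, ℝ)}

lemma apply_eq_zero_of_abs_le_mul_one_sub (hμ : ‖μ‖ ≤ 1) (hu : ∀ y, u y ∈ Icc (0 : ℝ) 1)
    (hμu : μ u = 1) {w : C(K, ℝ)} {c : ℝ} (hc : 0 ≤ c) (hw : ∀ y, |w y| ≤ c * (1 - u y)) :
    μ w = 0 := by
  have hle : ∀ s : ℝ, |s| = 1 → c + s * μ w ≤ c := by
    intro s hs
    have hnorm : ‖c • u + s • w‖ ≤ c := by
      refine (ContinuousMap.norm_le _ hc).2 fun y => ?_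
      calc ‖c * u y + s * w y‖ ≤ |c * u y| + |s * w y| := abs_add_le _ _
        _ = c * u y + |w y| := by rw [abs_mul, abs_mul, hs, one_mul, abs_of_nonneg hc,
            abs_of_nonneg (hu y).1]
        _ ≤ c := by linarith [hw y]
    calc c + s * μ w = μ (c • u + s • w) := by simp [hμu]
      _ ≤ ‖μ (c • u + s • w)‖ := le_abs_self _
      _ ≤ 1 * ‖c • u + s • w‖ := μ.le_of_opNorm_le hμ _
      _ ≤ c := by rw [one_mul]; exact hnorm
  linarith [hle 1 (by simp), hle (-1) (by simp)]

lemma apply_one_eq_one (hμ : ‖μ‖ ≤ 1) (hu : ∀ y, u y ∈ Icc (0 : ℝ) 1) (hμu : μ u = 1) :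
    μ 1 = 1 := by
  have := apply_eq_zero_of_abs_le_mul_one_sub hμ hu hμu (w := 1 - u) zero_le_one fun y => by
    simp [abs_of_nonneg (sub_nonneg.2 (hu y).2)]
  rw [map_sub, hμu] at this
  linarith

lemma abs_apply_sub_le_of_concentratesOn (hμ : ‖μ‖ ≤ 1) {V : Set K} (hV : ConcentratesOn μ V)
    (f : C(K, ℝ)) (x : K) {ε : ℝ} (hε : 0 ≤ ε) (hf : ∀ y ∈ V, |f y - f x| ≤ ε) :
    |μ f - f x| ≤ ε := by
  obtain ⟨u, hu, huV, hμu⟩ := hV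
  set g : C(K, ℝ) := f - f x • 1
  -- `g = u * g + (1 - u) * g`, where `μ` kills the second term and the first has norm `≤ ε`
  have hfar : μ ((1 - u) * g) = 0 :=
    apply_eq_zero_of_abs_le_mul_one_sub hμ hu hμu (norm_nonneg g) fun y => by
      have h1u : |(1 - u) y| = 1 - u y := by simp [(hu y).2]
      rw [ContinuousMap.mul_apply, abs_mul, mul_comm, h1u]
      exact mul_le_mul_of_nonneg_right (g.norm_coe_le_norm y) (sub_nonneg.2 (hu y).2)
  have hnear : ‖u * g‖ ≤ ε := by
    refine (ContinuousMap.norm_le _ hε).2 fun y => ?_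
    by_cases hy : y ∈ V
    · calc ‖u y * g y‖ = |u y| * |f y - f x| := by simp [g]
        _ ≤ 1 * ε := by
          gcongr
          · exact abs_le.2 ⟨by linarith [(hu y).1], (hu y).2⟩
          · exact hf y hy
        _ = ε := one_mul ε
    · simp [huV hy, hε]
  have hsplit : μ f - f x = μ (u * g) + μ ((1 - u) * g) := by
    rw [← map_add, ← add_mul, add_sub_cancel, one_mul, map_sub, map_smul,
      apply_one_eq_one hμ hu hμu, smul_eq_mul, mul_one]
  calc |μ f - f x| = |μ (u * g)| := by rw [hsplit, hfar, add_zero]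
    _ ≤ 1 * ‖u * g‖ := μ.le_of_opNorm_le hμ _
    _ ≤ ε := by rw [one_mul]; exact hnear

lemma tendsto_dirac_of_concentratesOn {x : K} (ν : OpenNhdsOf x → StrongDual ℝ C(K, ℝ))
    (hν : ∀ V, ‖ν V‖ ≤ 1) (hνV : ∀ V, ConcentratesOn (ν V) V) :
    Tendsto (fun V => StrongDual.toWeakDual (ν V)) atBot
      (𝓝 (StrongDual.toWeakDual (dirac x))) := by
  refine tendsto_iff_forall_eval_tendsto_topDualPairing.2 fun f => ?_
  refine Metric.tendsto_nhds.2 fun ε hε => eventually_atBot.2 ?_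
  let W : OpenNhdsOf x :=
    ⟨⟨{y | |f y - f x| < ε / 2}, isOpen_lt (by fun_prop) continuous_const⟩, by simpa using hε⟩
  refine ⟨W, fun V hVW => ?_⟩
  rw [Real.dist_eq]
  have := abs_apply_sub_le_of_concentratesOn (hν V) (hνV V) f x (half_pos hε).le
    fun y hy => (hVW hy).le
  exact this.trans_lt (half_lt_self hε)

end DualUnitBall

lemma exists_forall_one_sub_le_two_pow_mul {K : Type*} [TopologicalSpace K] (u : ℕ → C(K, ℝ))
    (hu : ∀ m y, u m y ∈ Icc (0 : ℝ) 1) {x : K} (hx : ∀ m, u m x = 1) :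
    ∃ g : C(K, ℝ), g x = 1 ∧ (∀ y, g y ∈ Icc (0 : ℝ) 1) ∧
      ∀ m y, 1 - u m y ≤ 2 ^ (m + 1) * (1 - g y) := by
  set a : ℕ → ℝ := fun m => (1 / 2) ^ (m + 1)
  have ha : Summable a := by simpa [a, pow_succ] using summable_geometric_two.mul_right 2⁻¹
  have ha_tsum : ∑' m, a m = 1 := by
    simp only [a, pow_succ, tsum_mul_right, tsum_geometric_two]; norm_num
  have hterm : ∀ m y, 0 ≤ a m * (1 - u m y) ∧ a m * (1 - u m y) ≤ a m := fun m y =>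
    ⟨mul_nonneg (by positivity) (by linarith [(hu m y).2]),
      mul_le_of_le_one_right (by positivity) (by linarith [(hu m y).1])⟩
  have hsummable : ∀ y, Summable fun m => a m * (1 - u m y) := fun y =>
    ha.of_nonneg_of_le (fun m => (hterm m y).1) fun m => (hterm m y).2
  let h : C(K, ℝ) := ⟨fun y => ∑' m, a m * (1 - u m y), continuous_tsum (fun m => by fun_prop) ha
    fun m y => by rw [Real.norm_eq_abs, abs_of_nonneg (hterm m y).1]; exact (hterm m y).2⟩
  refine ⟨1 - h, ?_, fun y => ?_, fun m y => ?_⟩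
  · simp [h, hx]
  · have h0 : 0 ≤ h y := tsum_nonneg fun m => (hterm m y).1
    have h1 : h y ≤ 1 := ha_tsum ▸ (hsummable y).tsum_le_tsum (fun m => (hterm m y).2) ha
    simp only [ContinuousMap.sub_apply, ContinuousMap.one_apply, mem_Icc]
    constructor <;> linarith
  · have hle : a m * (1 - u m y) ≤ h y :=
      (hsummable y).le_tsum m fun j _ => (hterm j y).1
    have ha2 : 2 ^ (m + 1) * a m = 1 := by simp [a]
    simp only [ContinuousMap.sub_apply, ContinuousMap.one_apply, sub_sub_cancel]
    calc 1 - u m y = 2 ^ (m + 1) * (a m * (1 - u m y)) := by rw [← mul_assoc, ha2, one_mul]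
      _ ≤ 2 ^ (m + 1) * h y := by gcongr

section Dirac

variable {K : Type*} [TopologicalSpace K] [CompactSpace K] [T2Space K]

lemma exists_index_forall_concentratesOn {B : Set (StrongDual ℝ C(K, ℝ))}
    (hB : IsBoundaryFor (fun f : C(K, ℝ) => ‖f‖) B) (S : ℕ → Set (StrongDual ℝ C(K, ℝ)))
    (hBS : B ⊆ ⋃ m, S m) (x : K) :
    ∃ m, ∀ V : OpenNhdsOf x, ∃ μ ∈ B ∩ S m, ConcentratesOn μ V := by
  by_contra! hbad
  choose V hV using hbad
  choose u hu0 hu1 hu using fun m => exists_continuous_zero_one_of_isClosed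
    (V m).isOpen.isClosed_compl isClosed_singleton
    (disjoint_singleton_right.2 fun h => h (V m).mem)
  obtain ⟨g, hgx, hg, hgu⟩ := exists_forall_one_sub_le_two_pow_mul u hu fun m => hu1 m rfl
  have hg_norm : ‖g‖ = 1 := by
    refine le_antisymm ((ContinuousMap.norm_le _ zero_le_one).2 fun y => ?_) ?_
    · rw [Real.norm_eq_abs, abs_of_nonneg (hg y).1]; exact (hg y).2
    · simpa [hgx] using g.norm_coe_le_norm x
  obtain ⟨μ, hμB, hμg⟩ := hB.2 g hg_norm
  obtain ⟨m, hμS⟩ := mem_iUnion.1 (hBS hμB)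
  have hμ : ‖μ‖ ≤ 1 := StrongDual.norm_le_one_of_forall_apply_le_norm (hB.1 μ hμB)
  have hμu : μ (1 - u m) = 0 :=
    apply_eq_zero_of_abs_le_mul_one_sub hμ hg hμg (c := 2 ^ (m + 1)) (by positivity) fun y => by
      simpa [abs_of_nonneg (sub_nonneg.2 (hu m y).2)] using hgu m y
  refine hV m μ ⟨hμB, hμS⟩ ⟨u m, hu m, hu0 m, ?_⟩
  rw [map_sub, apply_one_eq_one hμ hg hμg] at hμu
  linarith

lemma dirac_mem_of_isWeakStarSigmaCompact {B E : Set (StrongDual ℝ C(K, ℝ))}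
    (hB : IsBoundaryFor (fun f : C(K, ℝ) => ‖f‖) B) (hBE : B ⊆ E)
    (hE : IsWeakStarSigmaCompact E) (x : K) : dirac x ∈ E := by
  obtain ⟨C, hC, hEC⟩ := hE
  have hBC : B ⊆ ⋃ m, StrongDual.toWeakDual ⁻¹' C m := by
    rw [← preimage_iUnion, ← hEC]
    exact hBE.trans (subset_preimage_image _ _)
  obtain ⟨m, hm⟩ := exists_index_forall_concentratesOn hB _ hBC x
  choose ν hν hνV using hm
  have hδ : StrongDual.toWeakDual (dirac x) ∈ C m :=
    (hC m).isClosed.mem_of_tendsto (tendsto_dirac_of_concentratesOn ν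
      (fun V => StrongDual.norm_le_one_of_forall_apply_le_norm (hB.1 _ (hν V).1)) hνV)
      (Eventually.of_forall fun V => (hν V).2)
  exact StrongDual.toWeakDual.injective.mem_set_image.1 (hEC ▸ mem_iUnion.2 ⟨m, hδ⟩)

lemma one_le_dist_dirac {y z : K} (hyz : y ≠ z) : 1 ≤ dist (dirac y) (dirac z) := by
  obtain ⟨f, hfz, hfy, hf⟩ := exists_continuous_zero_one_of_isClosed isClosed_singleton
    isClosed_singleton (disjoint_singleton.2 hyz.symm)
  have hf_norm : ‖f‖ ≤ 1 := (ContinuousMap.norm_le _ zero_le_one).2 fun w => by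
    rw [Real.norm_eq_abs, abs_of_nonneg (hf w).1]; exact (hf w).2
  calc 1 = (dirac y - dirac z) f := by simp [hfy rfl, hfz rfl]
    _ ≤ ‖(dirac y - dirac z) f‖ := le_abs_self _
    _ ≤ ‖dirac y - dirac z‖ * 1 :=
        ContinuousLinearMap.le_of_opNorm_le_of_le _ le_rfl hf_norm
    _ = _ := by rw [mul_one]; exact (dist_eq_norm (dirac y) (dirac z)).symm

lemma discreteTopology_dirac_preimage {E : Set (StrongDual ℝ C(K, ℝ))} (hE : IsWeakStarLRC E) :
    DiscreteTopology {x : K | dirac x ∈ E} := by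
  refine discreteTopology_of_finite_inter_mem_nhds fun x hx => ?_
  obtain ⟨U, hU, hxU, hEU⟩ := hE _ hx
  have hδ : Continuous fun y : K => StrongDual.toWeakDual (dirac y) :=
    WeakDual.continuous_of_continuous_eval fun f => f.continuous
  refine ⟨_, (hU.preimage hδ).mem_nhds hxU, ?_⟩
  have hsep : Metric.IsSeparated (1 / 2 : NNReal)
      (dirac '' ({x | dirac x ∈ E} ∩
        (fun y : K => StrongDual.toWeakDual (dirac y)) ⁻¹' U)) := by
    rintro _ ⟨y, -, rfl⟩ _ ⟨z, -, rfl⟩ hne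
    have hyz : y ≠ z := fun h => hne (h ▸ rfl)
    calc ((1 / 2 : NNReal) : ENNReal) < 1 := by norm_num
      _ ≤ edist (dirac y) (dirac z) := by
        rw [edist_dist]; exact ENNReal.one_le_ofReal.2 (one_le_dist_dirac hyz)
  refine (hsep.finite_of_isCompact_closure (by norm_num) ?_ hEU).of_finite_image ?_
  · rintro _ ⟨y, hy, rfl⟩; exact hy
  · intro y _ z _ h
    by_contra hyz
    have := one_le_dist_dirac hyz
    rw [h, dist_self] at this
    linarith

end Dirac

theorem stmt18 {K : Type*} [TopologicalSpace K] [CompactSpace K] [T2Space K]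
    (B : Set (StrongDual ℝ C(K, ℝ)))
    (hB : IsBoundaryFor (fun f : C(K, ℝ) => ‖f‖) B)
    (E : ℕ → Set (StrongDual ℝ C(K, ℝ))) (hE : ∀ n, IsWeakStarLRC (E n))
    (hcov : B ⊆ ⋃ n, E n)
    (hKσ : IsWeakStarSigmaCompact (⋃ n, E n)) :
    ∃ D : ℕ → Set K, (Set.univ : Set K) = ⋃ n, D n ∧ ∀ n, DiscreteTopology (D n) := by
  refine ⟨fun n => {x | dirac x ∈ E n}, ?_, fun n => discreteTopology_dirac_preimage (hE n)⟩
  refine (eq_univ_of_forall fun x => ?_).symm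
  simpa using dirac_mem_of_isWeakStarSigmaCompact hB hcov hKσ x
end
end
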